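/- arXiv:1609.09369 — 2 statements merged into one kernel-verified Lean document; each statement's English description precedes it below -/
import Mathlib

section
/- Let H be a Hilbert space and I the identity operator on H. For x ≠ 0, the set V_I(x) = {y ∈ H : ⟨x−y, y⟩ > 0} equals the open ball of center x/2 and radius ‖x‖/2, and the quasimonotone polar of I is I^ν = cone(I) ∪ ({0} × H), i.e., I^ν(x) = {t·x : t ≥ 0} for x ≠ 0 and I^ν(0) = H. -/
open NormedSpace

variable {X : Type*} [NormedAddCommGroup X] [NormedSpace ℝ X]

/-- quasimonotone relation: (x,x*) ∼q (y,y*) iff min{⟨y−x,x*⟩, ⟨x−y,y*⟩} ≤ 0 -/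
def qrel (p q : X × StrongDual ℝ X) : Prop :=
  min (p.2 (q.1 - p.1)) (q.2 (p.1 - q.1)) ≤ 0

/-- quasimonotone polar -/
def qpolar (T : Set (X × StrongDual ℝ X)) : Set (X × StrongDual ℝ X) :=
  {p | ∀ q ∈ T, qrel p q}

/-- imagewise conic hull of an operator -/
def coneOp (T : Set (X × StrongDual ℝ X)) : Set (X × StrongDual ℝ X) :=
  {p | ∃ t : ℝ, 0 ≤ t ∧ ∃ v, (p.1, v) ∈ T ∧ p.2 = t • v}

def QuasiMono (T : Set (X × StrongDual ℝ X)) : Prop := ∀ p ∈ T, ∀ q ∈ T, qrel p q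

def MaxQuasiMono (T : Set (X × StrongDual ℝ X)) : Prop :=
  QuasiMono T ∧ ∀ S, QuasiMono S → T ⊆ S → S = T

def Vset (T : Set (X × StrongDual ℝ X)) (x : X) : Set X :=
  {y | ∃ y' : StrongDual ℝ X, (y, y') ∈ T ∧ 0 < y' (x - y)}

/-- the image T^ν(x) of the quasimonotone polar -/
def polarIm (T : Set (X × StrongDual ℝ X)) (x : X) : Set (StrongDual ℝ X) :=
  {x' | (x, x') ∈ qpolar T}

/-- normal cone of C at x (no convexity or membership assumed) -/
def normalCone (C : Set X) (x : X) : Set (StrongDual ℝ X) :=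
  {x' | ∀ y ∈ C, x' (y - x) ≤ 0}

def im (T : Set (X × StrongDual ℝ X)) (x : X) : Set (StrongDual ℝ X) := {v | (x, v) ∈ T}

/-- effective domain: T(u) nonempty and ≠ {0} -/
def edom (T : Set (X × StrongDual ℝ X)) : Set X :=
  {u | (im T u).Nonempty ∧ im T u ≠ {0}}

/-- conic hull of a set in the dual -/
def coneSet (A : Set (StrongDual ℝ X)) : Set (StrongDual ℝ X) :=
  {v | ∃ t : ℝ, 0 ≤ t ∧ ∃ a ∈ A, v = t • a}

def Eset (T : Set (X × StrongDual ℝ X)) : Set X := {x | Vset T x = ∅}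

/-- solution set of the Minty variational inequality for S on K -/
def Minty (S : Set (X × StrongDual ℝ X)) (K : Set X) : Set X :=
  {x ∈ K | ∀ q ∈ S, q.1 ∈ K → q.2 (x - q.1) ≤ 0}

def AEMaxQuasiMono (T : Set (X × StrongDual ℝ X)) : Prop :=
  QuasiMono T ∧ ∀ S, QuasiMono S → (∀ x ∈ edom T, im T x ⊆ coneSet (im S x)) →
    (∀ x ∈ edom T, coneSet (im T x) = coneSet (im S x)) ∧ edom T = edom S

/-!
The points `y` with `⟪x - y, y⟫ > 0` form the open ball with diameter `[0, x]`, so `(x, f)` lies in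
the quasimonotone polar of the identity exactly when `f` is a normal to that ball at `x`. For
`x ≠ 0` the point `x` is on the boundary and the normal cone there is the ray through `x`; for
`x = 0` the ball is empty and every `f` is normal.
-/

open Metric InnerProductSpace
open scoped RealInnerProductSpace

theorem polarIm_eq_normalCone_Vset (T : Set (X × StrongDual ℝ X)) (x : X) :
    polarIm T x = normalCone (Vset T x) x := by
  ext f
  simp only [polarIm, qpolar, normalCone, Vset, qrel, Set.mem_ofPred_eq]
  constructor
  · rintro h y ⟨y', hy, hpos⟩
    exact (min_le_iff.1 (h _ hy)).resolve_right hpos.not_ge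
  · rintro h ⟨y, y'⟩ hy
    by_cases hpos : 0 < y' (x - y)
    · exact min_le_of_left_le (h y ⟨y', hy, hpos⟩)
    · exact min_le_of_right_le (not_lt.1 hpos)

section InnerProductSpace

variable {H : Type*} [NormedAddCommGroup H] [InnerProductSpace ℝ H]

theorem norm_sub_half_smul_sq (x y : H) :
    ‖y - (1 / 2 : ℝ) • x‖ ^ 2 = (‖x‖ / 2) ^ 2 - ⟪y, x - y⟫ := by
  rw [norm_sub_sq_real, real_inner_smul_right, norm_smul, inner_sub_right,
    real_inner_self_eq_norm_sq, real_inner_comm, Real.norm_of_nonneg (by norm_num)]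
  ring

theorem real_inner_sub_nonpos_of_mem_closedBall {c x y : H} (hy : y ∈ closedBall c ‖x - c‖) :
    ⟪x - c, y - x⟫ ≤ 0 := by
  rw [mem_closedBall, dist_eq_norm] at hy
  have hyx : y - x = (y - c) - (x - c) := by abel
  calc ⟪x - c, y - x⟫ = ⟪x - c, y - c⟫ - ‖x - c‖ ^ 2 := by
        rw [hyx, inner_sub_right, real_inner_self_eq_norm_sq]
    _ ≤ ‖x - c‖ * ‖y - c‖ - ‖x - c‖ ^ 2 := by gcongr; exact real_inner_le_norm _ _
    _ ≤ 0 := by nlinarith [norm_nonneg (x - c)]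

/-- By continuity the hypothesis extends to the closed ball; at its point `c + (‖x - c‖ / ‖v‖) • v`
it forces equality in Cauchy–Schwarz for `v` and `x - c`. -/
theorem exists_nonneg_smul_of_inner_sub_nonpos {c x v : H} (hxc : x ≠ c)
    (hv : ∀ y ∈ ball c ‖x - c‖, ⟪v, y - x⟫ ≤ 0) : ∃ t : ℝ, 0 ≤ t ∧ v = t • (x - c) := by
  rcases eq_or_ne v 0 with rfl | hv0
  · exact ⟨0, le_rfl, by simp⟩
  set r := ‖x - c‖
  have hr : 0 < r := norm_pos_iff.2 (sub_ne_zero.2 hxc)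
  have hvn : 0 < ‖v‖ := norm_pos_iff.2 hv0
  have hclosed : closedBall c r ⊆ {y | ⟪v, y - x⟫ ≤ 0} := by
    rw [← closure_ball c hr.ne']
    exact closure_minimal hv (isClosed_le (by fun_prop) continuous_const)
  have htest : c + (r / ‖v‖) • v ∈ closedBall c r := by
    rw [mem_closedBall, dist_eq_norm, add_sub_cancel_left, norm_smul, Real.norm_of_nonneg
      (by positivity), div_mul_cancel₀ _ hvn.ne']
  have hle : ‖v‖ * r ≤ ⟪v, x - c⟫ := by
    have h := hclosed htest
    have hyx : c + (r / ‖v‖) • v - x = (r / ‖v‖) • v - (x - c) := by abel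
    rw [Set.mem_ofPred_eq, hyx, inner_sub_right, real_inner_smul_right,
      real_inner_self_eq_norm_sq] at h
    have : r / ‖v‖ * ‖v‖ ^ 2 = ‖v‖ * r := by field_simp
    linarith
  have heq : ‖x - c‖ • v = ‖v‖ • (x - c) :=
    inner_eq_norm_mul_iff_real.1 (le_antisymm (real_inner_le_norm _ _) hle)
  refine ⟨‖v‖ / r, by positivity, ?_⟩
  rw [div_eq_inv_mul, mul_smul, ← heq, smul_smul, inv_mul_cancel₀ hr.ne', one_smul]

variable [CompleteSpace H]

theorem normalCone_ball {c x : H} (hxc : x ≠ c) :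
    normalCone (ball c ‖x - c‖) x = {f | ∃ t : ℝ, 0 ≤ t ∧ f = t • toDual ℝ H (x - c)} := by
  ext f
  obtain ⟨v, rfl⟩ := (toDual ℝ H).surjective f
  simp only [normalCone, Set.mem_ofPred_eq, toDual_apply_apply, ← map_smul,
    (toDual ℝ H).injective.eq_iff]
  constructor
  · exact exists_nonneg_smul_of_inner_sub_nonpos hxc
  · rintro ⟨t, ht, rfl⟩ y hy
    rw [real_inner_smul_left]
    exact mul_nonpos_of_nonneg_of_nonpos ht
      (real_inner_sub_nonpos_of_mem_closedBall (ball_subset_closedBall hy))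

theorem Vset_toDual (x : H) :
    Vset {p : H × StrongDual ℝ H | p.2 = toDual ℝ H p.1} x = ball ((1 / 2 : ℝ) • x) (‖x‖ / 2) := by
  ext y
  simp only [Vset, Set.mem_ofPred_eq, exists_eq_left, toDual_apply_apply, mem_ball, dist_eq_norm]
  rw [← sq_lt_sq₀ (norm_nonneg _) (by positivity), norm_sub_half_smul_sq]
  constructor <;> intro h <;> linarith

end InnerProductSpace

theorem stmt11 {H : Type*} [NormedAddCommGroup H] [InnerProductSpace ℝ H] [CompleteSpace H] :
    (∀ x : H, x ≠ 0 →
      Vset {p : H × StrongDual ℝ H | p.2 = InnerProductSpace.toDual ℝ H p.1} x =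
        Metric.ball ((1 / 2 : ℝ) • x) (‖x‖ / 2)) ∧
    (∀ x : H, x ≠ 0 →
      polarIm {p : H × StrongDual ℝ H | p.2 = InnerProductSpace.toDual ℝ H p.1} x =
        {v | ∃ t : ℝ, 0 ≤ t ∧ v = t • InnerProductSpace.toDual ℝ H x}) ∧
    polarIm {p : H × StrongDual ℝ H | p.2 = InnerProductSpace.toDual ℝ H p.1} 0 = Set.univ := by
  refine ⟨fun x _ ↦ Vset_toDual x, fun x hx ↦ ?_, ?_⟩
  · have hhalf : x - (1 / 2 : ℝ) • x = (1 / 2 : ℝ) • x := by module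
    have hne : x ≠ (1 / 2 : ℝ) • x := by
      rw [ne_eq, ← sub_eq_zero, hhalf, smul_eq_zero]; norm_num [hx]
    have hr : ‖x‖ / 2 = ‖x - (1 / 2 : ℝ) • x‖ := by
      rw [hhalf, norm_smul, Real.norm_of_nonneg (by norm_num)]; ring
    rw [polarIm_eq_normalCone_Vset, Vset_toDual, hr, normalCone_ball hne, hhalf, map_smul]
    ext f
    simp only [Set.mem_ofPred_eq, smul_smul]
    constructor
    · rintro ⟨t, ht, rfl⟩; exact ⟨t * (1 / 2), by positivity, rfl⟩
    · rintro ⟨t, ht, rfl⟩; exact ⟨2 * t, by positivity, by ring_nf⟩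
  · rw [polarIm_eq_normalCone_Vset, Vset_toDual, norm_zero, zero_div, ball_zero]
    simp [normalCone]
end

section
/- If T is quasimonotone, then T^ν is the union of all maximal quasimonotone extensions of T, T^{νν} is their intersection, and T is maximal quasimonotone if and only if T = T^ν. -/
open NormedSpace

variable {X : Type*} [NormedAddCommGroup X] [NormedSpace ℝ X]

/-!
Since the quasimonotone relation is symmetric and reflexive, `p ∈ T^ν` says exactly that
`T ∪ {p}` is quasimonotone. By Zorn's lemma `T ∪ {p}` lies in a maximal quasimonotone `M`, and
conversely every such `M ⊇ T` lies in `T^ν`; this gives the union. Maximality of `M` means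
`M^ν ⊆ M`, so `M = M^ν`, and `M ⊆ T^ν` gives `T^{νν} ⊆ M^ν = M`; the reverse inclusion holds
because every point of `T^ν` lies in one of these `M`, which is quasimonotone.
-/

section

variable {T M S : Set (X × StrongDual ℝ X)} {p q : X × StrongDual ℝ X}

lemma qrel_comm : qrel p q ↔ qrel q p := by
  simp only [qrel, min_comm]

lemma qrel_refl (p : X × StrongDual ℝ X) : qrel p p := by
  simp [qrel]

lemma qpolar_anti (h : S ⊆ T) : qpolar T ⊆ qpolar S :=
  fun _ hp q hq => hp q (h hq)

lemma QuasiMono.subset_qpolar (hT : QuasiMono T) : T ⊆ qpolar T := hT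

lemma QuasiMono.insert (hT : QuasiMono T) (hp : p ∈ qpolar T) : QuasiMono (insert p T) := by
  rintro a (rfl | ha) b (rfl | hb)
  · exact qrel_refl _
  · exact hp b hb
  · exact qrel_comm.mp (hp a ha)
  · exact hT a ha b hb

lemma QuasiMono.exists_maxQuasiMono_superset (hT : QuasiMono T) :
    ∃ M, MaxQuasiMono M ∧ T ⊆ M := by
  have chain_bound : ∀ c ⊆ {S | QuasiMono S ∧ T ⊆ S}, IsChain (· ⊆ ·) c → c.Nonempty →
      ∃ ub ∈ {S | QuasiMono S ∧ T ⊆ S}, ∀ s ∈ c, s ⊆ ub := by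
    intro c hc hchain ⟨S₀, hS₀⟩
    refine ⟨⋃₀ c, ⟨?_, (hc hS₀).2.trans (Set.subset_sUnion_of_mem hS₀)⟩,
      fun s hs => Set.subset_sUnion_of_mem hs⟩
    rintro p ⟨S, hS, hpS⟩ q ⟨S', hS', hqS'⟩
    rcases hchain.total hS hS' with h | h
    · exact (hc hS').1 p (h hpS) q hqS'
    · exact (hc hS).1 p hpS q (h hqS')
  obtain ⟨M, hTM, hM⟩ := zorn_subset_nonempty _ chain_bound T ⟨hT, subset_rfl⟩
  exact ⟨M, ⟨hM.prop.1, fun S hS hMS =>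
    subset_antisymm (hM.le_of_ge ⟨hS, hM.prop.2.trans hMS⟩ hMS) hMS⟩, hTM⟩

lemma MaxQuasiMono.qpolar_subset (hM : MaxQuasiMono M) : qpolar M ⊆ M := fun p hp => by
  rw [← hM.2 _ (hM.1.insert hp) (Set.subset_insert p M)]
  exact Set.mem_insert p M

lemma maxQuasiMono_iff_eq_qpolar : MaxQuasiMono T ↔ T = qpolar T := by
  refine ⟨fun hmax => subset_antisymm hmax.1.subset_qpolar hmax.qpolar_subset, fun h => ?_⟩
  have hT : QuasiMono T := h.subset
  refine ⟨hT, fun S hS hTS => subset_antisymm ?_ hTS⟩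
  calc S ⊆ qpolar S := hS.subset_qpolar
    _ ⊆ qpolar T := qpolar_anti hTS
    _ = T := h.symm

lemma MaxQuasiMono.subset_qpolar_of_subset (hM : MaxQuasiMono M) (hTM : T ⊆ M) :
    M ⊆ qpolar T :=
  hM.1.subset_qpolar.trans (qpolar_anti hTM)

lemma qpolar_eq_sUnion_maxQuasiMono (hT : QuasiMono T) :
    qpolar T = ⋃₀ {M | MaxQuasiMono M ∧ T ⊆ M} := by
  refine subset_antisymm (fun p hp => ?_) ?_
  · obtain ⟨M, hM, hpTM⟩ := (hT.insert hp).exists_maxQuasiMono_superset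
    exact ⟨M, ⟨hM, (Set.subset_insert p T).trans hpTM⟩, hpTM (Set.mem_insert p T)⟩
  · rintro p ⟨M, ⟨hM, hTM⟩, hpM⟩
    exact hM.subset_qpolar_of_subset hTM hpM

lemma qpolar_qpolar_eq_sInter_maxQuasiMono (hT : QuasiMono T) :
    qpolar (qpolar T) = ⋂₀ {M | MaxQuasiMono M ∧ T ⊆ M} := by
  refine subset_antisymm ?_ ?_
  · rintro p hp M ⟨hM, hTM⟩
    exact hM.qpolar_subset (qpolar_anti (hM.subset_qpolar_of_subset hTM) hp)
  · intro p hp q hq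
    rw [qpolar_eq_sUnion_maxQuasiMono hT] at hq
    obtain ⟨M, hM, hqM⟩ := hq
    exact hM.1.1 p (hp M hM) q hqM

end

theorem stmt14_general (T : Set (X × StrongDual ℝ X)) (hT : QuasiMono T) :
    qpolar T = ⋃₀ {M | MaxQuasiMono M ∧ T ⊆ M} ∧
    qpolar (qpolar T) = ⋂₀ {M | MaxQuasiMono M ∧ T ⊆ M} ∧
    (MaxQuasiMono T ↔ T = qpolar T) :=
  ⟨qpolar_eq_sUnion_maxQuasiMono hT, qpolar_qpolar_eq_sInter_maxQuasiMono hT,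
    maxQuasiMono_iff_eq_qpolar⟩

theorem stmt14 [CompleteSpace X] (T : Set (X × StrongDual ℝ X)) (hT : QuasiMono T) :
    qpolar T = ⋃₀ {M | MaxQuasiMono M ∧ T ⊆ M} ∧
    qpolar (qpolar T) = ⋂₀ {M | MaxQuasiMono M ∧ T ⊆ M} ∧
    (MaxQuasiMono T ↔ T = qpolar T) :=
  stmt14_general T hT
end
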